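/- arXiv:0802.3010 — 4 statements merged into one kernel-verified Lean document; each statement's English description precedes it below -/
import Mathlib

section
/- For every integer k ≥ 1, the set L(k) has cardinality (k-1)!. -/
/-- Formal expressions: complete binary bracketings with leaves labeled by natural numbers. -/
inductive BTree : Type
  | leaf : ℕ → BTree
  | node : BTree → BTree → BTree
  deriving DecidableEq

namespace BTree

/-- The list of leaf labels, read from left to right. -/
def leaves : BTree → List ℕ
  | leaf i => [i]
  | node l r => leaves l ++ leaves r

/-- In every bracket `[u,v]`, the minimum index occurs inside `u`
and the maximum index occurs inside `v`. -/
def valid : BTree → Prop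
  | leaf _ => True
  | node l r => valid l ∧ valid r ∧
      (∃ a ∈ leaves l, ∀ i ∈ leaves l ++ leaves r, a ≤ i) ∧
      (∃ b ∈ leaves r, ∀ i ∈ leaves l ++ leaves r, i ≤ b)

/-- Membership in `L n`: the leaf labels are exactly `1, …, n`, each occurring
exactly once (in any order), and the min/max condition holds at every bracket. -/
def memL (n : ℕ) (t : BTree) : Prop :=
  (leaves t).Perm (List.range' 1 n) ∧ valid t

end BTree

/-!
At the root of a tree in `L(S)` the labels split into those of the left and of the right subtree.
The minimum `a` of `S` must go left and the maximum `b` right, every other label may go either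
way, and each side is again an arbitrary element of `L` of its label set. With `m = |S| - 2`,
induction on `|S|` therefore gives
`|L(S)| = ∑_{B ⊆ S ∖ {a, b}} |B|! (m - |B|)! = ∑_j C(m, j) j! (m - j)! = (m + 1)!`.
-/

open Finset
open scoped Nat

theorem sum_powerset_factorial_mul_factorial {α : Type*} (T : Finset α) :
    ∑ B ∈ T.powerset, (#B)! * (#T - #B)! = (#T + 1)! := by
  rw [sum_powerset_apply_card (fun j => j ! * (#T - j)!)]
  calc ∑ j ∈ range (#T + 1), (#T).choose j • (j ! * (#T - j)!)
      = ∑ _j ∈ range (#T + 1), (#T)! := sum_congr rfl fun j hj => by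
        rw [smul_eq_mul, ← mul_assoc,
          Nat.choose_mul_factorial_mul_factorial (Nat.lt_succ_iff.mp (mem_range.mp hj))]
    _ = (#T + 1)! := by rw [sum_const, card_range, smul_eq_mul, Nat.factorial_succ]

theorem exists_mem_forall_le_iff_of_isLeast {α : Type*} [PartialOrder α] {s : Set α} {a : α}
    (ha : IsLeast s a) {u : List α} (hu : ∀ x ∈ u, x ∈ s) :
    (∃ c ∈ u, ∀ i ∈ s, c ≤ i) ↔ a ∈ u :=
  ⟨fun ⟨c, hc, hle⟩ => ha.unique ⟨hu c hc, hle⟩ ▸ hc, fun h => ⟨a, h, ha.2⟩⟩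

theorem exists_mem_forall_ge_iff_of_isGreatest {α : Type*} [PartialOrder α] {s : Set α} {b : α}
    (hb : IsGreatest s b) {u : List α} (hu : ∀ x ∈ u, x ∈ s) :
    (∃ c ∈ u, ∀ i ∈ s, i ≤ c) ↔ b ∈ u :=
  ⟨fun ⟨c, hc, hle⟩ => hb.unique ⟨hu c hc, hle⟩ ▸ hc, fun h => ⟨b, h, hb.2⟩⟩

namespace BTree

theorem leaves_ne_nil : ∀ t : BTree, t.leaves ≠ []
  | leaf _ => List.cons_ne_nil _ _
  | node l _ => by simp [leaves, leaves_ne_nil l]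

/-- `L S` is the paper's `L(n)` with the label set `{1, …, n}` replaced by `S`. -/
def L (S : Finset ℕ) : Type := {t : BTree // (t.leaves : Multiset ℕ) = S.val ∧ t.valid}

variable {S : Finset ℕ}

theorem mem_leaves_iff {t : BTree} (h : (t.leaves : Multiset ℕ) = S.val) {x : ℕ} :
    x ∈ t.leaves ↔ x ∈ S := by
  rw [← Multiset.mem_coe, h, mem_val]

theorem card_L_singleton (x : ℕ) : Nat.card (L {x}) = 1 := by
  refine Nat.card_eq_one_iff_exists.mpr ⟨⟨leaf x, rfl, trivial⟩, ?_⟩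
  rintro ⟨t, ht, -⟩
  cases t with
  | leaf y =>
    obtain rfl : y = x := by simpa [leaves] using ht
    rfl
  | node l r =>
    have hlen := congrArg Multiset.card ht
    have hl := List.length_pos_iff.mpr l.leaves_ne_nil
    have hr := List.length_pos_iff.mpr r.leaves_ne_nil
    simp only [leaves, Multiset.coe_card, List.length_append, card_val, card_singleton] at hlen
    omega

theorem valid_node_iff {a b : ℕ} (ha : IsLeast (S : Set ℕ) a) (hb : IsGreatest (S : Set ℕ) b)
    {l r : BTree} (h : ((l.leaves ++ r.leaves : List ℕ) : Multiset ℕ) = S.val) :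
    (node l r).valid ↔ l.valid ∧ r.valid ∧ a ∈ l.leaves ∧ b ∈ r.leaves := by
  have hmem : ∀ i, i ∈ l.leaves ++ r.leaves ↔ i ∈ (S : Set ℕ) := fun i =>
    mem_leaves_iff (t := node l r) h
  simp only [valid, hmem]
  rw [exists_mem_forall_le_iff_of_isLeast ha fun x hx => (hmem x).mp (List.mem_append_left _ hx),
    exists_mem_forall_ge_iff_of_isGreatest hb fun x hx => (hmem x).mp (List.mem_append_right _ hx)]

section Decomposition

variable {a b : ℕ}

theorem val_insert_add_val_insert_sdiff (ha : a ∈ S) (hb : b ∈ S) (hab : a ≠ b)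
    {B : Finset ℕ} (hB : B ⊆ (S.erase a).erase b) :
    (insert a B).val + (insert b ((S.erase a).erase b \ B)).val = S.val := by
  have hdisj : Disjoint (insert a B) (insert b ((S.erase a).erase b \ B)) := by
    rw [disjoint_left]
    have := @hB a
    have := @hB b
    grind
  change (disjUnion _ _ hdisj).val = S.val
  rw [disjUnion_eq_union]
  congr 1
  ext x
  have := @hB x
  grind

/-- Splitting `S` at the root of a tree: `B` is the set of labels other than `a = min S` and
`b = max S` that go to the left subtree. -/
abbrev Decomposition (S : Finset ℕ) (a b : ℕ) : Type :=
  Σ B : ((S.erase a).erase b).powerset,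
    L (insert a B.1) × L (insert b ((S.erase a).erase b \ B.1))

variable (ha : IsLeast (S : Set ℕ) a) (hb : IsGreatest (S : Set ℕ) b) (hab : a ≠ b)

def graft (x : Decomposition S a b) : L S :=
  ⟨node x.2.1.1 x.2.2.1, by
    obtain ⟨⟨B, hB⟩, ⟨l, hl, hlv⟩, ⟨r, hr, hrv⟩⟩ := x
    have hleaves : ((l.leaves ++ r.leaves : List ℕ) : Multiset ℕ) = S.val := by
      rw [← Multiset.coe_add, hl, hr,
        val_insert_add_val_insert_sdiff ha.1 hb.1 hab (mem_powerset.mp hB)]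
    exact ⟨hleaves, (valid_node_iff ha hb hleaves).mpr ⟨hlv, hrv,
      (mem_leaves_iff hl).mpr (mem_insert_self _ _),
      (mem_leaves_iff hr).mpr (mem_insert_self _ _)⟩⟩⟩

theorem graft_injective : Function.Injective (graft ha hb hab) := by
  rintro ⟨⟨B, hB⟩, ⟨l, hl⟩, ⟨r, _⟩⟩ ⟨⟨B', hB'⟩, ⟨l', hl'⟩, ⟨r', _⟩⟩ h
  obtain ⟨rfl, rfl⟩ : l = l' ∧ r = r' := by simpa [graft] using congrArg Subtype.val h
  have haB : a ∉ B := fun haB => by simpa using mem_powerset.mp hB haB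
  have haB' : a ∉ B' := fun haB' => by simpa using mem_powerset.mp hB' haB'
  obtain rfl : B = B' := by
    rw [← erase_insert haB, ← erase_insert haB', ← val_inj.mp (hl.1.symm.trans hl'.1)]
  rfl

theorem graft_surjective : Function.Surjective (graft ha hb hab) := by
  rintro ⟨t, ht, hvalid⟩
  cases t with
  | leaf x =>
    have hx : ∀ y ∈ S, y = x := fun y hy => by simpa [leaves] using (mem_leaves_iff ht).mpr hy
    exact absurd ((hx a ha.1).trans (hx b hb.1).symm) hab
  | node l r =>
    obtain ⟨hl, hr, hal, hbr⟩ := (valid_node_iff ha hb ht).mp hvalid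
    have hnd : (l.leaves ++ r.leaves).Nodup := by
      rw [← Multiset.coe_nodup]; exact ht ▸ S.nodup
    obtain ⟨hndl, hndr, hdisj⟩ := List.nodup_append.mp hnd
    have hS : ∀ x, x ∈ S ↔ x ∈ l.leaves ∨ x ∈ r.leaves := fun x => by
      rw [← List.mem_append]; exact (mem_leaves_iff ht).symm
    set B := l.leaves.toFinset.erase a
    have hB : B ⊆ (S.erase a).erase b := fun x hx => by
      simp only [B, mem_erase, List.mem_toFinset] at hx ⊢
      exact ⟨fun hxb => hdisj x hx.2 b hbr hxb, hx.1, (hS x).mpr (.inl hx.2)⟩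
    have hlB : (l.leaves : Multiset ℕ) = (insert a B).val :=
      (Multiset.Nodup.ext (Multiset.coe_nodup.mpr hndl) (nodup _)).mpr fun x => by
        simp only [Multiset.mem_coe, mem_val, B, mem_insert, mem_erase, List.mem_toFinset]
        grind
    have hrB : (r.leaves : Multiset ℕ) = (insert b ((S.erase a).erase b \ B)).val :=
      (Multiset.Nodup.ext (Multiset.coe_nodup.mpr hndr) (nodup _)).mpr fun x => by
        simp only [Multiset.mem_coe, mem_val, B, mem_insert, mem_erase, mem_sdiff,
          List.mem_toFinset]
        have := hdisj x
        grind
    exact ⟨⟨⟨B, mem_powerset.mpr hB⟩, ⟨l, hlB, hl⟩, ⟨r, hrB, hr⟩⟩, rfl⟩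

noncomputable def decompositionEquiv : Decomposition S a b ≃ L S :=
  Equiv.ofBijective _ ⟨graft_injective ha hb hab, graft_surjective ha hb hab⟩

end Decomposition

theorem card_L (n : ℕ) : ∀ S : Finset ℕ, #S = n + 1 → Nat.card (L S) = n ! := by
  induction n using Nat.strong_induction_on with
  | _ n ih =>
  intro S hS
  rcases n with _ | m
  · obtain ⟨x, rfl⟩ := card_eq_one.mp hS
    exact card_L_singleton x
  have hne : S.Nonempty := card_pos.mp (by omega)
  set a := S.min' hne
  set b := S.max' hne
  have hab : a ≠ b := (min'_lt_max'_of_card S (by omega)).ne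
  set T := (S.erase a).erase b
  have haT : a ∉ T := by simp [T]
  have hbT : b ∉ T := by simp [T]
  have hT : #T = m := by
    rw [card_erase_of_mem (mem_erase.mpr ⟨hab.symm, max'_mem S hne⟩),
      card_erase_of_mem (min'_mem S hne)]
    omega
  have hleft : ∀ B ∈ T.powerset, Nat.card (L (insert a B)) = (#B)! := fun B hB => by
    have hBT := mem_powerset.mp hB
    have := card_le_card hBT
    exact ih #B (by omega) _ (card_insert_of_notMem fun h => haT (hBT h))
  have hright : ∀ B ∈ T.powerset, Nat.card (L (insert b (T \ B))) = (m - #B)! := fun B hB => by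
    rw [← hT, ← card_sdiff_of_subset (mem_powerset.mp hB)]
    exact ih _ (by have := card_le_card (sdiff_subset (s := T) (t := B)); omega) _
      (card_insert_of_notMem fun h => hbT (sdiff_subset h))
  have : ∀ B : T.powerset, Finite (L (insert a B) × L (insert b (T \ B))) := fun B =>
    Nat.finite_of_card_ne_zero (by rw [Nat.card_prod, hleft _ B.2, hright _ B.2]; positivity)
  calc Nat.card (L S)
      = Nat.card (Decomposition S a b) :=
        Nat.card_congr (decompositionEquiv (isLeast_min' S hne) (isGreatest_max' S hne) hab).symm
    _ = ∑ B ∈ T.powerset, (#B)! * (#T - #B)! := by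
      rw [Nat.card_sigma, ← sum_coe_sort T.powerset]
      exact sum_congr rfl fun B _ => by rw [Nat.card_prod, hleft _ B.2, hright _ B.2, hT]
    _ = (m + 1)! := by rw [sum_powerset_factorial_mul_factorial, hT]

end BTree

/-- For every integer `k ≥ 1`, the set `L(k)` has cardinality `(k-1)!`. -/
theorem L_card (k : ℕ) (hk : 1 ≤ k) :
    Nat.card {t : BTree // BTree.memL k t} = (k - 1).factorial := by
  obtain ⟨n, rfl⟩ := Nat.exists_eq_add_of_le' hk
  let S : Finset ℕ := ⟨List.range' 1 (n + 1), List.nodup_range'⟩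
  calc Nat.card {t : BTree // BTree.memL (n + 1) t}
      = Nat.card (BTree.L S) := Nat.card_congr (Equiv.subtypeEquivRight fun t => by
        simp [BTree.memL, S, Multiset.coe_eq_coe])
    _ = n ! := BTree.card_L n S (List.length_range' ..)
end

section
/- For every integer k ≥ 2, in the free Lie ring on k generators over ℤ, the ℤ-submodule spanned by the evaluations of all multilinear bracketings (complete binary bracketings of x_1,…,x_k in which each symbol occurs exactly once, in any order) is equal to the ℤ-submodule spanned by the evaluations of the elements of L(k). -/
namespace BTree

/-- Evaluation of a formal bracketing in the free Lie ring (free Lie algebra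
over `ℤ`) on generators indexed by `ℕ`: the symbol `x_i` is interpreted as the
generator of index `i` and each formal bracket as the Lie bracket. -/
noncomputable def ev : BTree → FreeLieAlgebra ℤ ℕ
  | leaf i => FreeLieAlgebra.of ℤ i
  | node l r => ⁅ev l, ev r⁆

end BTree

theorem lie_mem_of_mem_span {R L : Type*} [CommRing R] [LieRing L] [LieAlgebra R L]
    {A B : Set L} {p : Submodule R L} (h : ∀ a ∈ A, ∀ b ∈ B, ⁅a, b⁆ ∈ p) {x y : L}
    (hx : x ∈ Submodule.span R A) (hy : y ∈ Submodule.span R B) : ⁅x, y⁆ ∈ p := by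
  have hxy := Submodule.apply_mem_map₂ (LieModule.toEnd R L L : L →ₗ[R] Module.End R L) hx hy
  rw [Submodule.map₂_span_span] at hxy
  refine Submodule.span_le.2 ?_ hxy
  rintro _ ⟨a, ha, b, hb, rfl⟩
  exact h a ha b hb

namespace Multiset

variable {α : Type*}

def ContainsMin [Preorder α] (s S : Multiset α) : Prop := ∃ a ∈ s, ∀ i ∈ S, a ≤ i

def ContainsMax [Preorder α] (s S : Multiset α) : Prop := ∃ b ∈ s, ∀ i ∈ S, i ≤ b

theorem ContainsMin.trans [Preorder α] {s t S : Multiset α} (hs : ContainsMin s t)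
    (ht : ContainsMin t S) : ContainsMin s S :=
  let ⟨a, ha, hat⟩ := hs
  let ⟨m, hm, hmS⟩ := ht
  ⟨a, ha, fun i hi => (hat m hm).trans (hmS i hi)⟩

theorem ContainsMax.trans [Preorder α] {s t S : Multiset α} (hs : ContainsMax s t)
    (ht : ContainsMax t S) : ContainsMax s S :=
  let ⟨b, hb, htb⟩ := hs
  let ⟨M, hM, hSM⟩ := ht
  ⟨b, hb, fun i hi => (hSM i hi).trans (htb M hM)⟩

theorem ContainsMin.mono [Preorder α] {s t S : Multiset α} (h : ContainsMin s S) (hst : s ≤ t) :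
    ContainsMin t S :=
  let ⟨a, ha, haS⟩ := h
  ⟨a, mem_of_le hst ha, haS⟩

theorem ContainsMax.mono [Preorder α] {s t S : Multiset α} (h : ContainsMax s S) (hst : s ≤ t) :
    ContainsMax t S :=
  let ⟨b, hb, hSb⟩ := h
  ⟨b, mem_of_le hst hb, hSb⟩

theorem containsMin_self [LinearOrder α] {S : Multiset α} (hS : S ≠ 0) : ContainsMin S S := by
  obtain ⟨a, ha, hmin⟩ := S.toFinset.exists_min_image id (by simpa using hS)
  exact ⟨a, mem_toFinset.1 ha, fun i hi => hmin i (mem_toFinset.2 hi)⟩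

theorem containsMax_self [LinearOrder α] {S : Multiset α} (hS : S ≠ 0) : ContainsMax S S := by
  obtain ⟨b, hb, hmax⟩ := S.toFinset.exists_max_image id (by simpa using hS)
  exact ⟨b, mem_toFinset.1 hb, fun i hi => hmax i (mem_toFinset.2 hi)⟩

end Multiset

namespace BTree

open Multiset

def content (t : BTree) : Multiset ℕ := leaves t

@[simp]
theorem content_leaf (i : ℕ) : content (leaf i) = {i} := rfl

@[simp]
theorem content_node (l r : BTree) : content (node l r) = content l + content r :=
  (Multiset.coe_add _ _).symm

theorem content_ne_zero : ∀ t : BTree, content t ≠ 0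
  | leaf i => singleton_ne_zero i
  | node l _ => by simp [content_ne_zero l]

theorem valid_node_iff_s1 {l r : BTree} :
    valid (node l r) ↔ valid l ∧ valid r ∧ ContainsMin (content l) (content l + content r) ∧
      ContainsMax (content r) (content l + content r) := by
  simp [valid, ContainsMin, ContainsMax, content]

noncomputable def validSpan (S : Multiset ℕ) : Submodule ℤ (FreeLieAlgebra ℤ ℕ) :=
  Submodule.span ℤ (ev '' {t | content t = S ∧ valid t})

theorem ev_mem_validSpan_of_valid {t : BTree} (ht : valid t) : ev t ∈ validSpan (content t) :=
  Submodule.subset_span ⟨t, ⟨rfl, ht⟩, rfl⟩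

theorem lie_mem_validSpan {s s' : Multiset ℕ} (hmin : ContainsMin s (s + s'))
    (hmax : ContainsMax s' (s + s')) {x y : FreeLieAlgebra ℤ ℕ} (hx : x ∈ validSpan s)
    (hy : y ∈ validSpan s') : ⁅x, y⁆ ∈ validSpan (s + s') := by
  refine lie_mem_of_mem_span ?_ hx hy
  rintro _ ⟨u, ⟨rfl, hu⟩, rfl⟩ _ ⟨v, ⟨rfl, hv⟩, rfl⟩
  simpa only [ev, content_node] using
    ev_mem_validSpan_of_valid (valid_node_iff_s1.2 ⟨hu, hv, hmin, hmax⟩)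

theorem lie_mem_validSpan_of_swap {s s' : Multiset ℕ} {x y : FreeLieAlgebra ℤ ℕ}
    (h : ⁅y, x⁆ ∈ validSpan (s' + s)) : ⁅x, y⁆ ∈ validSpan (s + s') := by
  rw [← lie_skew, add_comm]
  exact neg_mem h

theorem lie_ev_mem_validSpan_of_extremes_left {u v : BTree} (hu : valid u) (hv : valid v)
    (hmin : ContainsMin (content u) (content u + content v))
    (hmax : ContainsMax (content u) (content u + content v))
    (ih : ∀ w, card (content w) < card (content u) → valid w →
      ⁅ev w, ev v⁆ ∈ validSpan (content w + content v)) :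
    ⁅ev u, ev v⁆ ∈ validSpan (content u + content v) := by
  cases u with
  | leaf i =>
    -- a leaf carrying both extremes forces all labels to be equal, so `[leaf i, v]` is valid
    obtain ⟨_, hi_mem, hi_min⟩ := id hmin
    obtain ⟨_, hi_mem', hi_max⟩ := hmax
    rw [content_leaf, mem_singleton] at hi_mem hi_mem'
    rw [hi_mem] at hi_min
    rw [hi_mem'] at hi_max
    obtain ⟨j, hj⟩ := exists_mem_of_ne_zero (content_ne_zero v)
    have hmax_v : ContainsMax (content v) (content (leaf i) + content v) :=
      ⟨j, hj, fun x hx => (hi_max x hx).trans (hi_min j (mem_add.2 (Or.inr hj)))⟩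
    exact lie_mem_validSpan hmin hmax_v (ev_mem_validSpan_of_valid hu)
      (ev_mem_validSpan_of_valid hv)
  | node a b =>
    obtain ⟨ha, hb, hab_min, hab_max⟩ := valid_node_iff_s1.1 hu
    rw [content_node] at hmin hmax ⊢
    have hav := ih a (by simp [card_pos, content_ne_zero]) ha
    have hbv := ih b (by simp [card_pos, content_ne_zero]) hb
    have hmin_a := hab_min.trans hmin
    have hmax_b := hab_max.trans hmax
    rw [ev, lie_lie]
    refine sub_mem ?_ ?_
    · rw [add_assoc] at hmin_a hmax_b ⊢
      exact lie_mem_validSpan hmin_a (hmax_b.mono (le_add_right _ _))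
        (ev_mem_validSpan_of_valid ha) hbv
    · rw [add_right_comm, add_comm]
      refine lie_mem_validSpan_of_swap ?_
      rw [add_right_comm] at hmin_a hmax_b
      exact lie_mem_validSpan (hmin_a.mono (le_add_right _ _)) hmax_b hav
        (ev_mem_validSpan_of_valid hb)

theorem lie_ev_mem_validSpan (u v : BTree) (hu : valid u) (hv : valid v) :
    ⁅ev u, ev v⁆ ∈ validSpan (content u + content v) := by
  induction hn : card (content u) + card (content v) using Nat.strong_induction_on
    generalizing u v with
  | _ n ih =>
  have hS : content u + content v ≠ 0 := by simp [content_ne_zero]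
  obtain ⟨m, hm, hm_min⟩ := containsMin_self hS
  obtain ⟨M, hM, hM_max⟩ := containsMax_self hS
  rcases mem_add.1 hm with hmu | hmv <;> rcases mem_add.1 hM with hMu | hMv
  · exact lie_ev_mem_validSpan_of_extremes_left hu hv ⟨m, hmu, hm_min⟩ ⟨M, hMu, hM_max⟩
      fun w hw hw' => ih _ (by omega) w v hw' hv rfl
  · exact lie_mem_validSpan ⟨m, hmu, hm_min⟩ ⟨M, hMv, hM_max⟩ (ev_mem_validSpan_of_valid hu)
      (ev_mem_validSpan_of_valid hv)
  all_goals
    refine lie_mem_validSpan_of_swap ?_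
    rw [add_comm] at hm_min hM_max
  · exact lie_mem_validSpan ⟨m, hmv, hm_min⟩ ⟨M, hMu, hM_max⟩ (ev_mem_validSpan_of_valid hv)
      (ev_mem_validSpan_of_valid hu)
  · exact lie_ev_mem_validSpan_of_extremes_left hv hu ⟨m, hmv, hm_min⟩ ⟨M, hMv, hM_max⟩
      fun w hw hw' => ih _ (by omega) w u hw' hu rfl

theorem ev_mem_validSpan (t : BTree) : ev t ∈ validSpan (content t) := by
  induction t with
  | leaf i => exact ev_mem_validSpan_of_valid trivial
  | node l r ihl ihr =>
    refine lie_mem_of_mem_span ?_ ihl ihr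
    rintro _ ⟨u, ⟨hu, hu_valid⟩, rfl⟩ _ ⟨v, ⟨hv, hv_valid⟩, rfl⟩
    simpa only [content_node, hu, hv] using lie_ev_mem_validSpan u v hu_valid hv_valid

end BTree

theorem span_multilinear_eq_span_L_general (k : ℕ) :
    Submodule.span ℤ (BTree.ev '' {t : BTree | (BTree.leaves t).Perm (List.range' 1 k)}) =
    Submodule.span ℤ (BTree.ev '' {t : BTree | BTree.memL k t}) := by
  have hL : BTree.validSpan (List.range' 1 k) =
      Submodule.span ℤ (BTree.ev '' {t : BTree | BTree.memL k t}) := by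
    simp only [BTree.validSpan, BTree.content, Multiset.coe_eq_coe]
    rfl
  refine le_antisymm (Submodule.span_le.2 ?_)
    (Submodule.span_mono (Set.image_mono fun t ht => ht.1))
  rintro _ ⟨t, ht, rfl⟩
  rw [← hL, ← Multiset.coe_eq_coe.2 ht]
  exact BTree.ev_mem_validSpan t

/-- For every `k ≥ 2`, the `ℤ`-span of the evaluations of all multilinear
bracketings of `x_1, …, x_k` (each symbol occurring exactly once, in any order)
equals the `ℤ`-span of the evaluations of the elements of `L(k)`. -/
theorem span_multilinear_eq_span_L (k : ℕ) (hk : 2 ≤ k) :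
    Submodule.span ℤ (BTree.ev '' {t : BTree | (BTree.leaves t).Perm (List.range' 1 k)}) =
    Submodule.span ℤ (BTree.ev '' {t : BTree | BTree.memL k t}) :=
  span_multilinear_eq_span_L_general k
end

section
/- Let F(X) = Σ_{n≥1} (n-1)!·X^n ∈ ℚ[[X]] and let B = −F^{<−1>}, where F^{<−1>} is the unique formal power series G with zero constant term satisfying F(G(X)) = X. Then B satisfies the differential equation X·B'(X) + (B'(X) + B(X))·B(X) = 0 in ℚ[[X]]. -/
/-!
Since `n · (n-1)! = n!`, the series `F` satisfies `F = X + X²·F'`. Substituting `G` gives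
`X = G + G²·F'(G)`, and differentiating `F(G) = X` gives `F'(G)·G' = 1`; multiplying the
first identity by `G'` yields `X·G' = G·G' + G²`, which is the claimed equation for `B = -G`.
-/

/-- The generating series `F(X) = Σ_{n≥1} (n-1)!·X^n ∈ ℚ[[X]]`. -/
noncomputable def F : PowerSeries ℚ :=
  PowerSeries.mk fun n => if n = 0 then 0 else ((n - 1).factorial : ℚ)

/-- `G` is the compositional inverse `F^{<-1>}` of `F`: it has zero constant
term and `F(G(X)) = X`.  Since `G` has zero constant coefficient, the
coefficient of `X^n` in `F(G(X)) = Σ_{m≥1} (m-1)!·G^m` is the finite sum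
`Σ_{m=1}^{n} (m-1)!·[X^n]G^m`, so the equation `F(G(X)) = X` is expressed
coefficientwise by the finite sums below. -/
def IsCompInvOfF (G : PowerSeries ℚ) : Prop :=
  PowerSeries.constantCoeff G = 0 ∧
    ∀ n : ℕ,
      ∑ m ∈ Finset.Icc 1 n, ((m - 1).factorial : ℚ) * PowerSeries.coeff n (G ^ m) =
        PowerSeries.coeff n (PowerSeries.X : PowerSeries ℚ)

open PowerSeries

theorem F_eq_X_add_X_sq_mul_derivative : F = X + X ^ 2 * d⁄dX ℚ F := by
  ext n
  rcases n with _ | _ | n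
  · simp [F]
  · simp [F, coeff_X, coeff_X_pow_mul']
  · rw [map_add, coeff_X_pow_mul', if_pos (by omega), coeff_derivative, coeff_X,
      if_neg (by omega), zero_add, show n + 2 - 2 + 1 = n + 1 by omega]
    simp [F, Nat.factorial_succ, mul_comm]

theorem coeff_pow_eq_zero_of_lt {R : Type*} [CommSemiring R] {G : R⟦X⟧}
    (hG : constantCoeff G = 0) {m n : ℕ} (h : n < m) : coeff n (G ^ m) = 0 :=
  X_pow_dvd_iff.mp (pow_dvd_pow_of_dvd (X_dvd_iff.mpr hG) m) n h

theorem IsCompInvOfF.subst_eq_X {G : ℚ⟦X⟧} (hG : IsCompInvOfF G) : F.subst G = X := by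
  obtain ⟨hG0, hsum⟩ := hG
  ext n
  rw [coeff_subst' (HasSubst.of_constantCoeff_zero' hG0), ← hsum n,
    finsum_eq_sum_of_support_subset (s := Finset.Icc 1 n)]
  · refine Finset.sum_congr rfl fun m hm => ?_
    simp [F, Nat.one_le_iff_ne_zero.mp (Finset.mem_Icc.mp hm).1]
  · intro m hm
    have hm0 : m ≠ 0 := by rintro rfl; simp [F] at hm
    have hmn : m ≤ n := by
      by_contra! h
      exact hm (by simp [coeff_pow_eq_zero_of_lt hG0 h])
    simp only [Finset.coe_Icc, Set.mem_Icc]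
    omega

theorem X_mul_derivative_of_subst_eq_X {R : Type*} [CommRing R] {f G : R⟦X⟧}
    (hf : f = X + X ^ 2 * d⁄dX R f) (hG : HasSubst G) (hfG : f.subst G = X) :
    X * d⁄dX R G = G * d⁄dX R G + G ^ 2 := by
  have hchain : (d⁄dX R f).subst G * d⁄dX R G = 1 := by
    rw [← derivative_subst hG, hfG, derivative_X]
  have hsubst : X = G + G ^ 2 * (d⁄dX R f).subst G := by
    conv_lhs => rw [← hfG, hf]
    rw [subst_add hG, subst_mul hG, subst_pow hG, subst_X hG]
  calc X * d⁄dX R G = G * d⁄dX R G + G ^ 2 * ((d⁄dX R f).subst G * d⁄dX R G) := by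
        rw [hsubst]; ring
    _ = G * d⁄dX R G + G ^ 2 := by rw [hchain, mul_one]

open PowerSeries in
/-- `B = -F^{<-1>}` satisfies the differential equation
`X·B'(X) + (B'(X) + B(X))·B(X) = 0` in `ℚ[[X]]`. -/
theorem B_differential_equation (G : PowerSeries ℚ) (hG : IsCompInvOfF G) :
    PowerSeries.X * (d⁄dX ℚ (-G)) + ((d⁄dX ℚ (-G)) + (-G)) * (-G) = 0 := by
  have hXG := X_mul_derivative_of_subst_eq_X F_eq_X_add_X_sq_mul_derivative
    (HasSubst.of_constantCoeff_zero' hG.1) hG.subst_eq_X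
  rw [map_neg]
  linear_combination -hXG
end

section
/- The sequence a_n/n! converges to 1/e as n → ∞, where a_n is the number of stabilized-interval-free permutations of {1,…,n}; that is, the asymptotic density of SIF permutations among all permutations is e^{-1}. -/
/-- A permutation `σ` of `{1,…,n}` (modeled as `Fin n`) is
stabilized-interval-free (SIF) if it stabilizes no proper nonempty
subinterval: there are no `i ≤ j` with `{i,…,j} ≠ [n]` and
`σ({i,…,j}) = {i,…,j}`. -/
def SIF {n : ℕ} (σ : Equiv.Perm (Fin n)) : Prop :=
  ∀ i j : Fin n, i ≤ j → Finset.Icc i j ≠ Finset.univ →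
    Finset.image σ (Finset.Icc i j) ≠ Finset.Icc i j

/-- `a_n`, the number of SIF permutations of `{1,…,n}` (with `a_0 = 1`). -/
noncomputable def sifCount (n : ℕ) : ℕ := Nat.card {σ : Equiv.Perm (Fin n) // SIF σ}

/-
A SIF permutation of `[n]`, `n ≥ 2`, fixes no point, so `a_n ≤ D_n`, the number of derangements.
Conversely, a derangement that is not SIF stabilizes an interval of some length `2 ≤ k ≤ n - 1`;
there are `n + 1 - k` such intervals and each is stabilized by `k! (n - k)!` permutations, so
`D_n - a_n ≤ ∑ k! (n + 1 - k)! ≤ 10 (n - 1)!`, which is `o(n!)`. Hence `a_n / n!` has the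
same limit `1/e` as `D_n / n!`.
-/

open Finset Equiv Nat

theorem Nat.choose_le_choose_of_le_of_le_half {m a k : ℕ} (hak : a ≤ k) (hk : k ≤ m / 2) :
    m.choose a ≤ m.choose k := by
  induction k, hak using Nat.le_induction with
  | base => rfl
  | succ k hak ih => exact (ih (by omega)).trans (choose_le_succ_of_lt_half_left (by omega))

theorem Nat.choose_le_choose_of_le_of_le_sub {m a k : ℕ} (hak : a ≤ k) (hk : k ≤ m - a) :
    m.choose a ≤ m.choose k := by
  rcases le_or_gt k (m / 2) with h | h
  · exact choose_le_choose_of_le_of_le_half hak h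
  · rw [← choose_symm (by omega : k ≤ m)]
    exact choose_le_choose_of_le_of_le_half (by omega) (by omega)

theorem Nat.factorial_mul_factorial_le_of_le_of_le_sub {m a k : ℕ} (hak : a ≤ k)
    (hk : k ≤ m - a) :
    k ! * (m - k)! ≤ a ! * (m - a)! := by
  have hkm : k ≤ m := by omega
  refine Nat.le_of_mul_le_mul_left ?_ (choose_pos (hak.trans hkm))
  calc m.choose a * (k ! * (m - k)!) ≤ m.choose k * (k ! * (m - k)!) :=
        Nat.mul_le_mul_right _ (choose_le_choose_of_le_of_le_sub hak hk)
    _ = m.choose a * (a ! * (m - a)!) := by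
        rw [← mul_assoc, ← mul_assoc, choose_mul_factorial_mul_factorial hkm,
          choose_mul_factorial_mul_factorial (by omega)]

/-- The two end terms are `2 (m - 2)!`; each of the `m - 5` inner ones is at most `3! (m - 3)!`. -/
theorem Nat.sum_Icc_factorial_mul_factorial_le (m : ℕ) :
    ∑ k ∈ Icc 2 (m - 2), k ! * (m - k)! ≤ 10 * (m - 2)! := by
  obtain hm | hm := lt_or_ge m 5
  · interval_cases m <;> decide
  obtain ⟨j, rfl⟩ := Nat.exists_eq_add_of_le' hm
  have hmid : ∑ k ∈ Ioc 2 (j + 2), k ! * (j + 5 - k)! ≤ 6 * (j * (j + 2)!) := by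
    calc ∑ k ∈ Ioc 2 (j + 2), k ! * (j + 5 - k)! ≤ #(Ioc 2 (j + 2)) • (3 ! * (j + 2)!) :=
          sum_le_card_nsmul _ _ _ fun k hk => by
            rw [mem_Ioc] at hk
            exact factorial_mul_factorial_le_of_le_of_le_sub hk.1 (by omega)
      _ = 6 * (j * (j + 2)!) := by
          rw [Nat.card_Ioc, smul_eq_mul, show j + 2 - 2 = j by omega, show 3 ! = 6 from rfl]
          ring
  rw [show j + 5 - 2 = j + 2 + 1 by omega, sum_Icc_succ_top (by omega),
    ← add_sum_Ioc_eq_sum_Icc (by omega), show j + 5 - 2 = j + 2 + 1 by omega,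
    show j + 5 - (j + 2 + 1) = 2 by omega, factorial_succ (j + 2), factorial_two]
  nlinarith [Nat.zero_le ((j + 2)!)]

theorem Finset.image_perm_eq_self_iff {α : Type*} [DecidableEq α] (σ : Perm α) (s : Finset α) :
    s.image σ = s ↔ ∀ x, σ x ∈ s ↔ x ∈ s := by
  constructor
  · intro h x
    refine ⟨fun hx => ?_, fun hx => h ▸ mem_image_of_mem σ hx⟩
    obtain ⟨y, hy, hyx⟩ := mem_image.mp (h.symm ▸ hx)
    exact σ.injective hyx ▸ hy
  · intro h
    exact eq_of_subset_of_card_le (fun y hy => by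
      obtain ⟨x, hx, rfl⟩ := mem_image.mp hy; exact (h x).2 hx)
      (card_image_of_injective s σ.injective).ge

theorem Equiv.Perm.card_filter_image_eq_self {α : Type*} [Fintype α] [DecidableEq α]
    (s : Finset α) :
    #{σ : Perm α | s.image σ = s} = (#s)! * (Fintype.card α - #s)! := by
  let f : α → Bool := fun x => x ∈ s
  have key : ∀ σ : Perm α, s.image σ = s ↔ f ∘ σ = f := by
    intro σ
    simp [image_perm_eq_self_iff, funext_iff, f]
  rw [← Fintype.card_subtype, Fintype.card_congr (subtypeEquivRight key),
    DomMulAct.stabilizer_card, Fintype.prod_bool]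
  simp [f, Fintype.card_subtype, filter_not, card_sdiff]

def finIco (n a b : ℕ) : Finset (Fin n) := {x | a ≤ (x : ℕ) ∧ (x : ℕ) < b}

theorem card_finIco {n a b : ℕ} (h : b ≤ n) : #(finIco n a b) = b - a := by
  rw [← card_map Fin.valEmbedding, ← Nat.card_Ico a b]
  congr 1
  ext m
  simp only [finIco, mem_map, mem_filter, mem_univ, true_and, Fin.valEmbedding_apply, mem_Ico]
  exact ⟨fun ⟨x, hx, hxm⟩ => hxm ▸ hx, fun hm => ⟨⟨m, by omega⟩, hm, rfl⟩⟩

theorem Fin.Icc_eq_finIco {n : ℕ} (i j : Fin n) : Icc i j = finIco n i (j + 1) := by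
  ext x
  simp only [finIco, mem_Icc, mem_filter, mem_univ, true_and, Fin.le_def]
  omega

theorem SIF.mem_derangements {n : ℕ} {σ : Perm (Fin n)} (hn : 2 ≤ n) (hσ : SIF σ) :
    σ ∈ derangements (Fin n) := by
  intro x hx
  refine hσ x x le_rfl (fun h => ?_) (by rw [Icc_self, image_singleton, hx])
  have := congrArg card h
  rw [Icc_self, card_singleton, Finset.card_univ, Fintype.card_fin] at this
  omega

theorem exists_image_finIco_eq_of_not_SIF {n : ℕ} {σ : Perm (Fin n)}
    (hσ : σ ∈ derangements (Fin n)) (hsif : ¬ SIF σ) :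
    ∃ k ∈ Icc 2 (n - 1), ∃ a ∈ range (n + 1 - k),
      (finIco n a (a + k)).image σ = finIco n a (a + k) := by
  simp only [SIF, not_forall, not_not] at hsif
  obtain ⟨i, j, hij, hne, himg⟩ := hsif
  have hlt : i < j := hij.lt_of_ne fun h => by
    subst h
    rw [Icc_self, image_singleton, singleton_inj] at himg
    exact hσ i himg
  have hlen : (j : ℕ) + 1 - i < n := by
    simpa [Fin.card_Icc] using (card_lt_iff_ne_univ _).mpr hne
  refine ⟨j + 1 - i, ?_, i, ?_, ?_⟩
  · rw [mem_Icc]; omega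
  · rw [mem_range]; omega
  · rwa [show (i : ℕ) + (j + 1 - i) = j + 1 by omega, ← Fin.Icc_eq_finIco]

theorem sifCount_eq_card_filter (n : ℕ) [DecidablePred (SIF (n := n))] :
    sifCount n = #{σ : Perm (Fin n) | SIF σ} := by
  rw [sifCount, Nat.card_eq_fintype_card, Fintype.card_subtype]

theorem numDerangements_le_sifCount_add (n : ℕ) :
    numDerangements n ≤ sifCount n + ∑ k ∈ Icc 2 (n - 1), k ! * (n + 1 - k)! := by
  classical
  let stab (k a : ℕ) : Finset (Perm (Fin n)) :=
    {σ | (finIco n a (a + k)).image σ = finIco n a (a + k)}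
  have hsub : (derangements (Fin n)).toFinset ⊆
      ({σ | SIF σ} : Finset _) ∪
        (Icc 2 (n - 1)).biUnion fun k => (range (n + 1 - k)).biUnion (stab k) := by
    intro σ hσ
    rw [Set.mem_toFinset] at hσ
    by_cases hsif : SIF σ
    · exact mem_union_left _ (mem_filter.mpr ⟨mem_univ σ, hsif⟩)
    · obtain ⟨k, hk, a, ha, himg⟩ := exists_image_finIco_eq_of_not_SIF hσ hsif
      exact mem_union_right _ (mem_biUnion.mpr ⟨k, hk, mem_biUnion.mpr
        ⟨a, ha, mem_filter.mpr ⟨mem_univ σ, himg⟩⟩⟩)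
  have hstab :
      ∀ k ∈ Icc 2 (n - 1), ∀ a ∈ range (n + 1 - k), #(stab k a) = k ! * (n - k)! := by
    intro k hk a ha
    rw [mem_Icc] at hk
    rw [mem_range] at ha
    rw [Perm.card_filter_image_eq_self, card_finIco (by omega), Fintype.card_fin,
      Nat.add_sub_cancel_left]
  calc numDerangements n = #(derangements (Fin n)).toFinset := by
        rw [Set.toFinset_card, card_derangements_eq_numDerangements, Fintype.card_fin]
    _ ≤ sifCount n + ∑ k ∈ Icc 2 (n - 1), ∑ a ∈ range (n + 1 - k), #(stab k a) := by
        rw [sifCount_eq_card_filter]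
        refine (card_le_card hsub).trans ((card_union_le _ _).trans (Nat.add_le_add_left ?_ _))
        exact card_biUnion_le.trans (sum_le_sum fun k _ => card_biUnion_le)
    _ = sifCount n + ∑ k ∈ Icc 2 (n - 1), k ! * (n + 1 - k)! := by
        congr 1
        refine sum_congr rfl fun k hk => ?_
        rw [sum_congr rfl (hstab k hk), sum_const, card_range, smul_eq_mul,
          show n + 1 - k = n - k + 1 by rw [mem_Icc] at hk; omega, factorial_succ]
        ring

theorem sifCount_le_numDerangements {n : ℕ} (hn : 2 ≤ n) :
    sifCount n ≤ numDerangements n := by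
  classical
  rw [sifCount_eq_card_filter, ← card_derangements_fin_eq_numDerangements,
    ← Set.toFinset_card]
  exact card_le_card fun σ hσ => Set.mem_toFinset.mpr ((mem_filter.mp hσ).2.mem_derangements hn)

theorem numDerangements_le_sifCount_add_factorial (n : ℕ) :
    numDerangements n ≤ sifCount n + 10 * (n - 1)! := by
  have h := sum_Icc_factorial_mul_factorial_le (n + 1)
  rw [show n + 1 - 2 = n - 1 by omega] at h
  exact (numDerangements_le_sifCount_add n).trans (Nat.add_le_add_left h _)

theorem numDerangements_div_factorial_sub_le {n : ℕ} (hn : 1 ≤ n) :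
    (numDerangements n : ℝ) / (n !) - 10 / n ≤ sifCount n / n ! := by
  have hle : (numDerangements n : ℝ) ≤ sifCount n + 10 * (n - 1)! := by
    exact_mod_cast numDerangements_le_sifCount_add_factorial n
  have hfac : (n ! : ℝ) = n * (n - 1)! := by
    rw [← Nat.mul_factorial_pred (by omega)]; push_cast; ring
  have herr : (10 : ℝ) / n = 10 * (n - 1)! / n ! := by
    rw [hfac]; field_simp
  rw [herr, ← sub_div]
  gcongr
  linarith

open Filter in
/-- The asymptotic density of SIF permutations among all permutations is
`e⁻¹`: the sequence `a_n/n!` converges to `1/e`. -/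
theorem sif_density :
    Tendsto (fun n : ℕ => (sifCount n : ℝ) / n.factorial) atTop
      (nhds (Real.exp 1)⁻¹) := by
  rw [← Real.exp_neg]
  have hD := numDerangements_tendsto_inv_e
  have hlower : Tendsto (fun n : ℕ => (numDerangements n : ℝ) / (n !) - 10 / n) atTop
      (nhds (Real.exp (-1))) := by
    simpa using hD.sub (tendsto_const_div_atTop_nhds_zero_nat 10)
  refine tendsto_of_tendsto_of_tendsto_of_le_of_le' hlower hD ?_ ?_
  · filter_upwards [eventually_ge_atTop 1] with n hn
    exact numDerangements_div_factorial_sub_le hn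
  · filter_upwards [eventually_ge_atTop 2] with n hn
    gcongr
    exact_mod_cast sifCount_le_numDerangements hn
end
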